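/- Let Γ : I → ℂ³ be a normalized lift with ⟨Γ,Γ⟩ = ⟨Γ,Γ'⟩ = ⟨Γ',Γ''⟩ = 0, ⟨Γ',Γ'⟩ = −⟨Γ,Γ''⟩ = 1, define b = (1/2)⟨Γ'',Γ''⟩. If h : J → I is a smooth change of parameter and Γ̃ = (1/h')·(Γ∘h), then b̃ = (h')²·(b∘h) + h'''/h' − (3/2)(h''/h')², i.e. the quadratic density transforms with the Schwarzian derivative of h. -/

import Mathlib

open Complex

/-- The pseudo-Hermitian inner product ⟨z,w⟩ = i(conj z¹ w³ − conj z³ w¹) + conj z² w². -/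
noncomputable def herm (z w : Fin 3 → ℂ) : ℂ :=
  Complex.I * ((starRingEnd ℂ) (z 0) * w 2 - (starRingEnd ℂ) (z 2) * w 0) +
    (starRingEnd ℂ) (z 1) * w 1

/-- The quadratic Fubini density b = (1/2)⟨Γ'', Γ''⟩ of a lift Γ. -/
noncomputable def quadDensity (Γ : ℝ → (Fin 3 → ℂ)) (t : ℝ) : ℂ :=
  (1/2) * herm (iteratedDeriv 2 Γ t) (iteratedDeriv 2 Γ t)

/-!
Writing `p = h'`, the reparametrized lift `Γ̃ = p⁻¹ • Γ ∘ h` has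
`Γ̃'' = (2p'²/p³ − p''/p²) • Γ ∘ h − (p'/p) • Γ' ∘ h + p • Γ'' ∘ h`, a combination with real
coefficients. The Gram relations of the normalized frame `Γ, Γ', Γ''` kill every pairing except
`⟨Γ', Γ'⟩ = 1`, `⟨Γ, Γ''⟩ = ⟨Γ'', Γ⟩ = −1` and `⟨Γ'', Γ''⟩ = 2b`, so
`2b̃ = (p'/p)² − 2p(2p'²/p³ − p''/p²) + 2p²b`, which is twice `p² b + p''/p − (3/2)(p'/p)²`.
-/

lemma herm_conj_symm (z w : Fin 3 → ℂ) : herm w z = starRingEnd ℂ (herm z w) := by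
  simp only [herm, map_add, map_mul, map_sub, conj_I, conj_conj]
  ring

lemma herm_add_left (x y z : Fin 3 → ℂ) : herm (x + y) z = herm x z + herm y z := by
  simp only [herm, Pi.add_apply, map_add]
  ring

lemma herm_add_right (x y z : Fin 3 → ℂ) : herm x (y + z) = herm x y + herm x z := by
  simp only [herm, Pi.add_apply]
  ring

lemma herm_real_smul_left (a : ℝ) (x y : Fin 3 → ℂ) : herm (a • x) y = a * herm x y := by
  simp only [herm, Pi.smul_apply, real_smul, map_mul, conj_ofReal]
  ring

lemma herm_real_smul_right (a : ℝ) (x y : Fin 3 → ℂ) : herm x (a • y) = a * herm x y := by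
  simp only [herm, Pi.smul_apply, real_smul]
  ring

lemma herm_self_real_combination {x y z : Fin 3 → ℂ} (hxx : herm x x = 0) (hxy : herm x y = 0)
    (hyz : herm y z = 0) (hyy : herm y y = 1) (hxz : herm x z = -1) (a b c : ℝ) :
    herm (a • x + b • y + c • z) (a • x + b • y + c • z)
      = (b : ℂ) ^ 2 - 2 * a * c + (c : ℂ) ^ 2 * herm z z := by
  have hyx : herm y x = 0 := by rw [herm_conj_symm, hxy, map_zero]
  have hzy : herm z y = 0 := by rw [herm_conj_symm, hyz, map_zero]
  have hzx : herm z x = -1 := by rw [herm_conj_symm, hxz, map_neg, map_one]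
  simp only [herm_add_left, herm_add_right, herm_real_smul_left, herm_real_smul_right,
    hxx, hxy, hyz, hyy, hxz, hyx, hzy, hzx]
  ring

lemma ContDiff.hasDerivAt_iteratedDeriv {𝕜 F : Type*} [NontriviallyNormedField 𝕜]
    [NormedAddCommGroup F] [NormedSpace 𝕜 F] {f : 𝕜 → F} {n : WithTop ℕ∞}
    (hf : ContDiff 𝕜 n f) {k : ℕ} (hk : (k : WithTop ℕ∞) < n) (t : 𝕜) :
    HasDerivAt (iteratedDeriv k f) (iteratedDeriv (k + 1) f t) t := by
  rw [iteratedDeriv_succ]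
  exact (hf.differentiable_iteratedDeriv k hk t).hasDerivAt

section Reparametrization

variable {E : Type*} [NormedAddCommGroup E] [NormedSpace ℝ E] {Γ : ℝ → E} {h : ℝ → ℝ}

noncomputable def normalizedReparam (Γ : ℝ → E) (h : ℝ → ℝ) : ℝ → E :=
  fun u => (deriv h u)⁻¹ • Γ (h u)

lemma deriv_normalizedReparam (hΓ : ContDiff ℝ 1 Γ) (hh : ContDiff ℝ 2 h)
    (hh' : ∀ s, deriv h s ≠ 0) :
    deriv (normalizedReparam Γ h)
      = fun t => -(iteratedDeriv 2 h t / deriv h t ^ 2) • Γ (h t) + deriv Γ (h t) := by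
  funext t
  have hΓ' : HasDerivAt Γ (deriv Γ (h t)) (h t) :=
    (hΓ.differentiable one_ne_zero (h t)).hasDerivAt
  have hh1 : HasDerivAt h (deriv h t) t := (hh.differentiable two_ne_zero t).hasDerivAt
  have hp : HasDerivAt (deriv h) (iteratedDeriv 2 h t) t := by
    simpa only [iteratedDeriv_one] using hh.hasDerivAt_iteratedDeriv (k := 1) (by norm_num) t
  refine ((hp.inv (hh' t)).smul (hΓ'.scomp t hh1)).deriv.trans ?_
  rw [Pi.inv_apply, smul_smul, inv_mul_cancel₀ (hh' t), one_smul, add_comm, neg_div,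
    Function.comp_apply]

lemma iteratedDeriv_two_normalizedReparam (hΓ : ContDiff ℝ 2 Γ) (hh : ContDiff ℝ 3 h)
    (hh' : ∀ s, deriv h s ≠ 0) (s : ℝ) :
    iteratedDeriv 2 (normalizedReparam Γ h) s
      = (2 * iteratedDeriv 2 h s ^ 2 / deriv h s ^ 3 - iteratedDeriv 3 h s / deriv h s ^ 2)
          • Γ (h s)
        + (-(iteratedDeriv 2 h s / deriv h s)) • iteratedDeriv 1 Γ (h s)
        + deriv h s • iteratedDeriv 2 Γ (h s) := by
  rw [iteratedDeriv_succ, iteratedDeriv_one,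
    deriv_normalizedReparam (hΓ.of_le (by norm_num)) (hh.of_le (by norm_num)) hh']
  have hΓ1 : HasDerivAt Γ (iteratedDeriv 1 Γ (h s)) (h s) := by
    simpa only [iteratedDeriv_zero, zero_add] using hΓ.hasDerivAt_iteratedDeriv (k := 0)
      (by norm_num) (h s)
  have hΓ2 : HasDerivAt (deriv Γ) (iteratedDeriv 2 Γ (h s)) (h s) := by
    simpa only [iteratedDeriv_one] using hΓ.hasDerivAt_iteratedDeriv (k := 1) (by norm_num) (h s)
  have hh1 : HasDerivAt h (deriv h s) s := (hh.differentiable (by norm_num) s).hasDerivAt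
  have hp : HasDerivAt (deriv h) (iteratedDeriv 2 h s) s := by
    simpa only [iteratedDeriv_one] using hh.hasDerivAt_iteratedDeriv (k := 1) (by norm_num) s
  have hq : HasDerivAt (iteratedDeriv 2 h) (iteratedDeriv 3 h s) s :=
    hh.hasDerivAt_iteratedDeriv (k := 2) (by norm_num) s
  have hcoef := (hq.div (hp.pow 2) (pow_ne_zero 2 (hh' s))).neg
  refine ((hcoef.smul (hΓ1.scomp s hh1)).add (hΓ2.scomp s hh1)).deriv.trans ?_
  simp only [Pi.neg_apply, Pi.div_apply, Pi.pow_apply, Function.comp_apply]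
  have hp0 := hh' s
  match_scalars <;> field_simp
  ring

end Reparametrization

theorem stmt3 (Γ : ℝ → (Fin 3 → ℂ)) (hΓ : ContDiff ℝ (⊤ : ℕ∞) Γ)
    (h00 : ∀ t, herm (Γ t) (Γ t) = 0)
    (h01 : ∀ t, herm (Γ t) (iteratedDeriv 1 Γ t) = 0)
    (h12 : ∀ t, herm (iteratedDeriv 1 Γ t) (iteratedDeriv 2 Γ t) = 0)
    (h11 : ∀ t, herm (iteratedDeriv 1 Γ t) (iteratedDeriv 1 Γ t) = 1)
    (h02 : ∀ t, herm (Γ t) (iteratedDeriv 2 Γ t) = -1)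
    (h : ℝ → ℝ) (hh : ContDiff ℝ (⊤ : ℕ∞) h) (hh' : ∀ s, deriv h s ≠ 0) :
    ∀ s, quadDensity (fun u => (((deriv h u : ℝ) : ℂ))⁻¹ • Γ (h u)) s
      = ((deriv h s : ℝ) : ℂ)^2 * quadDensity Γ (h s)
        + ((iteratedDeriv 3 h s / deriv h s
            - (3/2) * (iteratedDeriv 2 h s / deriv h s)^2 : ℝ) : ℂ) := by
  intro s
  have hlift : (fun u => (((deriv h u : ℝ) : ℂ))⁻¹ • Γ (h u)) = normalizedReparam Γ h := by
    funext u
    rw [← ofReal_inv, coe_smul, normalizedReparam]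
  rw [quadDensity, quadDensity, hlift,
    iteratedDeriv_two_normalizedReparam (hΓ.of_le ENat.LEInfty.out) (hh.of_le ENat.LEInfty.out)
      hh',
    herm_self_real_combination (h00 _) (h01 _) (h12 _) (h11 _) (h02 _)]
  have hp0 : ((deriv h s : ℝ) : ℂ) ≠ 0 := ofReal_ne_zero.mpr (hh' s)
  push_cast
  field_simp
  ring
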